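/- Let α, β ∈ (0,1), n ∈ ℕ, n ≥ 1, and let c₁, c₂, a₀, b₁, r₁,…,rₙ, k₁,…,kₙ ∈ ℝ. Then u(x,t) = c₁ - c₂ b₁ (Γ(β+1)/Γ(α+1)) t^α + c₂ x^β + Σ_{s=1}^n r_s E_α((a₀ k_s - b₁) k_s t^α) E_β(k_s x^β) is an exact solution of the linear time-space fractional diffusion–convection equation: for all x > 0 and t > 0, (C_t^α u)(x,t) = a₀ (C_x^β (C_x^β u))(x,t) - b₁ (C_x^β u)(x,t). -/

import Mathlib

/-!
The fractional monomials `y^{μr}/Γ(μr+1)` are shifted by the Caputo derivative of order `μ`: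
by the Beta integral `∫₀ˣ y^{p-1}(x-y)^{-μ} dy = Γ(p)Γ(1-μ)/Γ(p+1-μ) · x^{p-μ}`, the `(r+1)`-st
is sent to the `r`-th and the constant one to `0`. For a series `Σ bᵣ y^{μr}/Γ(μr+1)` with
exponentially bounded coefficients, termwise differentiation and the exchange of sum and
integral are justified by the growth bound `Γ(x+μ) ≥ x^μ Γ(x)/2` (from log-convexity of `Γ`),
and the Caputo derivative acts on it as the shift `bᵣ ↦ bᵣ₊₁`. A constant, `y^μ` and
`E_μ(k y^μ)` are such series, sent to `0`, `Γ(μ+1)` and `k E_μ(k x^μ)`. Applied in `t` with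
order `α` and twice in `x` with order `β`, this turns both sides of the equation into
`-c₂ b₁ Γ(β+1) + Σₛ rₛ (a₀kₛ - b₁) kₛ E_α(…) E_β(…)`.
-/

/-- The two-parameter Mittag-Leffler function `E_{β,γ}(z) = Σ_{r=0}^∞ z^r / Γ(βr + γ)`. -/
noncomputable def mittagLeffler (β γ z : ℝ) : ℝ :=
  ∑' r : ℕ, z ^ r / Real.Gamma (β * r + γ)

/-- Caputo fractional partial derivative of order `α` with respect to `t`. -/
noncomputable def caputoT (α : ℝ) (u : ℝ → ℝ → ℝ) : ℝ → ℝ → ℝ := fun x t =>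
  (1 / Real.Gamma (1 - α)) * ∫ s in (0:ℝ)..t, deriv (fun s' => u x s') s * (t - s) ^ (-α)

/-- Caputo fractional partial derivative of order `β` with respect to `x`. -/
noncomputable def caputoX (β : ℝ) (u : ℝ → ℝ → ℝ) : ℝ → ℝ → ℝ := fun x t =>
  (1 / Real.Gamma (1 - β)) * ∫ y in (0:ℝ)..x, deriv (fun y' => u y' t) y * (x - y) ^ (-β)

/-- The exact solution
`u(x,t) = c₁ - c₂ b₁ (Γ(β+1)/Γ(α+1)) t^α + c₂ x^β
          + Σ_{s=1}^n rₛ E_α((a₀ kₛ - b₁) kₛ t^α) E_β(kₛ x^β)`. -/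
noncomputable def uSol (α β : ℝ) (n : ℕ) (c₁ c₂ a₀ b₁ : ℝ) (r kc : Fin n → ℝ) :
    ℝ → ℝ → ℝ := fun x t =>
  c₁ - c₂ * b₁ * (Real.Gamma (β + 1) / Real.Gamma (α + 1)) * t ^ α + c₂ * x ^ β +
    ∑ s : Fin n,
      r s * mittagLeffler α 1 ((a₀ * kc s - b₁) * kc s * t ^ α) *
        mittagLeffler β 1 (kc s * x ^ β)


open Real Set Filter MeasureTheory

noncomputable def caputo (μ : ℝ) (f : ℝ → ℝ) (x : ℝ) : ℝ :=
  (1 / Gamma (1 - μ)) * ∫ y in (0:ℝ)..x, deriv f y * (x - y) ^ (-μ)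

theorem caputoT_eq_caputo (α : ℝ) (u : ℝ → ℝ → ℝ) (x t : ℝ) :
    caputoT α u x t = caputo α (u x) t := rfl

theorem caputoX_eq_caputo (β : ℝ) (u : ℝ → ℝ → ℝ) (x t : ℝ) :
    caputoX β u x t = caputo β (fun y => u y t) x := rfl

theorem integral_rpow_mul_sub_rpow {a b x : ℝ} (ha : 0 < a) (hb : 0 < b) (hx : 0 < x) :
    ∫ y in (0:ℝ)..x, y ^ (a - 1) * (x - y) ^ (b - 1)
      = Gamma a * Gamma b / Gamma (a + b) * x ^ (a + b - 1) := by
  have h := Complex.betaIntegral_scaled a b hx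
  rw [Complex.betaIntegral_eq_Gamma_mul_div _ _ (by simpa) (by simpa), ← Complex.ofReal_add,
    Complex.Gamma_ofReal, Complex.Gamma_ofReal, Complex.Gamma_ofReal] at h
  apply Complex.ofReal_injective
  rw [← intervalIntegral.integral_ofReal, intervalIntegral.integral_congr (g := fun y : ℝ =>
    (y : ℂ) ^ ((a : ℂ) - 1) * ((x : ℂ) - y) ^ ((b : ℂ) - 1)), h]
  · push_cast
    rw [Complex.ofReal_cpow hx.le]
    push_cast
    ring
  intro y hy
  rw [uIcc_of_le hx.le] at hy
  push_cast
  rw [Complex.ofReal_cpow hy.1, Complex.ofReal_cpow (sub_nonneg.2 hy.2)]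
  push_cast
  ring

theorem integral_mul_rpow_div_Gamma_mul_sub_rpow {μ p x : ℝ} (hμ : μ < 1) (hp : 0 < p)
    (hx : 0 < x) :
    ∫ y in (0:ℝ)..x, p * y ^ (p - 1) / Gamma (p + 1) * (x - y) ^ (-μ)
      = Gamma (1 - μ) * (x ^ (p - μ) / Gamma (p - μ + 1)) := by
  have hΓp := (Gamma_pos_of_pos hp).ne'
  have hintegrand : (fun y => p * y ^ (p - 1) / Gamma (p + 1) * (x - y) ^ (-μ))
      = fun y => y ^ (p - 1) * (x - y) ^ ((1 - μ) - 1) / Gamma p := by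
    ext y
    rw [Gamma_add_one hp.ne', sub_sub_cancel_left]
    field_simp
  rw [hintegrand, intervalIntegral.integral_div, integral_rpow_mul_sub_rpow hp (by linarith) hx,
    show p + (1 - μ) = p - μ + 1 by ring, show p - μ + 1 - 1 = p - μ by ring]
  field_simp

theorem Gamma_mul_rpow_le_two_mul_Gamma_add {μ x : ℝ} (hμ0 : 0 < μ) (hμ1 : μ < 1)
    (hx : 1 ≤ x) : Gamma x * x ^ μ ≤ 2 * Gamma (x + μ) := by
  have hx0 : 0 < x := by linarith
  have hxμ : 0 < x + μ := by linarith
  have hΓ := Gamma_pos_of_pos hxμ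
  -- log-convexity of `Γ` between `x + μ` and `x + μ + 1`
  have hconv : x * Gamma x ≤ Gamma (x + μ) * (x + μ) ^ (1 - μ) := by
    have h := Gamma_mul_add_mul_le_rpow_Gamma_mul_rpow_Gamma hxμ (by linarith : 0 < x + μ + 1)
      hμ0 (by linarith : 0 < 1 - μ) (by ring)
    rw [show μ * (x + μ) + (1 - μ) * (x + μ + 1) = x + 1 by ring, Gamma_add_one hx0.ne',
      Gamma_add_one hxμ.ne', mul_rpow hxμ.le hΓ.le, mul_left_comm,
      ← rpow_add hΓ, add_sub_cancel, rpow_one] at h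
    linarith
  have hpow : (x + μ) ^ (1 - μ) ≤ 2 * x ^ (1 - μ) :=
    calc (x + μ) ^ (1 - μ) ≤ (2 * x) ^ (1 - μ) := by gcongr; linarith
      _ = 2 ^ (1 - μ) * x ^ (1 - μ) := mul_rpow (by norm_num) hx0.le
      _ ≤ 2 * x ^ (1 - μ) := by
        gcongr
        exact rpow_le_self_of_one_le (by norm_num) (by linarith)
  have hsplit : x = x ^ μ * x ^ (1 - μ) := by rw [← rpow_add hx0]; simp
  refine le_of_mul_le_mul_right ?_ (rpow_pos_of_pos hx0 (1 - μ))
  calc Gamma x * x ^ μ * x ^ (1 - μ) = x * Gamma x := by rw [mul_assoc, ← hsplit, mul_comm]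
    _ ≤ Gamma (x + μ) * (2 * x ^ (1 - μ)) := hconv.trans (by gcongr)
    _ = 2 * Gamma (x + μ) * x ^ (1 - μ) := by ring

theorem summable_pow_div_Gamma {μ : ℝ} (hμ0 : 0 < μ) (hμ1 : μ < 1) (q : ℝ) :
    Summable fun r : ℕ => q ^ r / Gamma (μ * r + 1) := by
  refine summable_of_ratio_norm_eventually_le (r := 1 / 2) (by norm_num) ?_
  have hgrowth : Tendsto (fun r : ℕ => (μ * r + 1) ^ μ) atTop atTop :=
    (tendsto_rpow_atTop hμ0).comp <| tendsto_atTop_add_const_right _ _ <|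
      (tendsto_natCast_atTop_atTop (R := ℝ)).const_mul_atTop hμ0
  filter_upwards [hgrowth.eventually_ge_atTop (4 * |q|)] with r hr
  have hx : 1 ≤ μ * r + 1 := by have := r.cast_nonneg (α := ℝ); nlinarith
  have hΓ := Gamma_pos_of_pos (by linarith : 0 < μ * r + 1)
  have hΓ' := Gamma_pos_of_pos (by linarith : 0 < μ * r + 1 + μ)
  have hratio := Gamma_mul_rpow_le_two_mul_Gamma_add hμ0 hμ1 hx
  rw [show μ * ((r + 1 : ℕ) : ℝ) + 1 = μ * r + 1 + μ by push_cast; ring, norm_div, norm_div,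
    norm_pow, norm_pow, Real.norm_of_nonneg hΓ.le, Real.norm_of_nonneg hΓ'.le,
    div_le_iff₀ hΓ', pow_succ]
  have : |q| * Gamma (μ * r + 1) ≤ 1 / 2 * Gamma (μ * r + 1 + μ) := by
    nlinarith [mul_le_mul_of_nonneg_left hr hΓ.le]
  calc ‖q‖ ^ r * ‖q‖
      = 1 / 2 * (‖q‖ ^ r / Gamma (μ * r + 1)) * (2 * (|q| * Gamma (μ * r + 1))) := by
        field_simp
        simp
    _ ≤ 1 / 2 * (‖q‖ ^ r / Gamma (μ * r + 1)) * Gamma (μ * r + 1 + μ) := by gcongr; linarith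

noncomputable def fracMonomial (μ : ℝ) (r : ℕ) (y : ℝ) : ℝ :=
  y ^ (μ * r) / Gamma (μ * r + 1)

noncomputable def fracMonomialDeriv (μ : ℝ) (r : ℕ) (y : ℝ) : ℝ :=
  μ * r * y ^ (μ * r - 1) / Gamma (μ * r + 1)

theorem fracMonomial_zero (μ y : ℝ) : fracMonomial μ 0 y = 1 := by simp [fracMonomial]

theorem fracMonomial_one (μ y : ℝ) : fracMonomial μ 1 y = y ^ μ / Gamma (μ + 1) := by
  simp [fracMonomial]

theorem fracMonomial_eq_pow {μ y : ℝ} (hy : 0 ≤ y) (r : ℕ) :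
    fracMonomial μ r y = (y ^ μ) ^ r / Gamma (μ * r + 1) := by
  rw [fracMonomial, ← rpow_natCast, ← rpow_mul hy]

theorem fracMonomialDeriv_zero (μ : ℝ) : fracMonomialDeriv μ 0 = 0 := by
  ext y
  simp [fracMonomialDeriv]

theorem hasDerivAt_fracMonomial (μ : ℝ) (r : ℕ) {y : ℝ} (hy : y ≠ 0) :
    HasDerivAt (fracMonomial μ r) (fracMonomialDeriv μ r y) y :=
  (hasDerivAt_rpow_const (Or.inl hy)).div_const _

theorem integral_fracMonomialDeriv_succ_mul_sub_rpow {μ x : ℝ} (hμ0 : 0 < μ) (hμ1 : μ < 1)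
    (hx : 0 < x) (m : ℕ) :
    ∫ y in Ioc 0 x, fracMonomialDeriv μ (m + 1) y * (x - y) ^ (-μ)
      = Gamma (1 - μ) * fracMonomial μ m x := by
  rw [← intervalIntegral.integral_of_le hx.le]
  unfold fracMonomialDeriv fracMonomial
  rw [integral_mul_rpow_div_Gamma_mul_sub_rpow hμ1 (by positivity) hx]
  congr 3 <;> push_cast <;> ring

section FracPowerSeries

variable {μ C q : ℝ} {b : ℕ → ℝ}

theorem summable_mul_fracMonomial (hμ0 : 0 < μ) (hμ1 : μ < 1) (hb : ∀ r, |b r| ≤ C * q ^ r)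
    {y : ℝ} (hy : 0 ≤ y) : Summable fun r => b r * fracMonomial μ r y := by
  refine .of_norm_bounded ((summable_pow_div_Gamma hμ0 hμ1 (q * y ^ μ)).mul_left C) fun r => ?_
  have hterm : 0 ≤ (y ^ μ) ^ r / Gamma (μ * r + 1) := by positivity
  rw [fracMonomial_eq_pow hy, norm_mul, Real.norm_of_nonneg hterm, mul_pow, mul_div_assoc,
    ← mul_assoc, Real.norm_eq_abs]
  exact mul_le_mul_of_nonneg_right (hb r) hterm

theorem hasDerivAt_tsum_mul_fracMonomial (hμ0 : 0 < μ) (hμ1 : μ < 1)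
    (hb : ∀ r, |b r| ≤ C * q ^ r) {y : ℝ} (hy : 0 < y) :
    HasDerivAt (fun z => ∑' r, b r * fracMonomial μ r z)
      (∑' r, b r * fracMonomialDeriv μ r y) y := by
  set R := y + 1
  have hR : 0 < R := by positivity
  have hbound (r : ℕ) (z : ℝ) (hz : z ∈ Ioo (y / 2) R) : ‖b r * fracMonomialDeriv μ r z‖
      ≤ C * (μ * (2 / y)) * ((q * (2 * R ^ μ)) ^ r / Gamma (μ * r + 1)) := by
    obtain ⟨hz1, hz2⟩ := hz
    have hz : 0 < z := by linarith
    have hΓ := Gamma_pos_of_pos (by positivity : 0 < μ * r + 1)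
    have hr : (r : ℝ) ≤ 2 ^ r := by exact_mod_cast r.lt_two_pow_self.le
    have hzpow : z ^ (μ * r - 1) ≤ (R ^ μ) ^ r * (2 / y) := by
      rw [rpow_sub hz, rpow_one, ← rpow_natCast, ← rpow_mul hR.le, div_eq_mul_inv]
      gcongr
      rw [inv_le_comm₀ hz (by positivity), inv_div]
      linarith
    rw [norm_mul, Real.norm_eq_abs, fracMonomialDeriv, Real.norm_of_nonneg (by positivity)]
    calc |b r| * (μ * r * z ^ (μ * r - 1) / Gamma (μ * r + 1))
        ≤ C * q ^ r * (μ * 2 ^ r * ((R ^ μ) ^ r * (2 / y)) / Gamma (μ * r + 1)) := by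
          gcongr
          · exact (abs_nonneg _).trans (hb r)
          · exact hb r
      _ = C * (μ * (2 / y)) * ((q * (2 * R ^ μ)) ^ r / Gamma (μ * r + 1)) := by ring
  exact hasDerivAt_tsum_of_isPreconnected (t := Ioo (y / 2) R)
    (g' := fun r z => b r * fracMonomialDeriv μ r z)
    ((summable_pow_div_Gamma hμ0 hμ1 _).mul_left _) isOpen_Ioo isPreconnected_Ioo
    (fun r z hz => (hasDerivAt_fracMonomial μ r (by linarith [hz.1] : 0 < z).ne').const_mul (b r))
    hbound ⟨by linarith, by linarith⟩ (summable_mul_fracMonomial hμ0 hμ1 hb hy.le)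
    ⟨by linarith, by linarith⟩

theorem hasSum_integral_mul_fracMonomialDeriv_mul_sub_rpow (hμ0 : 0 < μ) (hμ1 : μ < 1)
    (hb : ∀ r, |b r| ≤ C * q ^ r) {x : ℝ} (hx : 0 < x) :
    HasSum (fun m => b (m + 1) * (Gamma (1 - μ) * fracMonomial μ m x))
      (∫ y in Ioc 0 x, ∑' r, b r * (fracMonomialDeriv μ r y * (x - y) ^ (-μ))) := by
  set g : ℕ → ℝ → ℝ := fun r y => fracMonomialDeriv μ r y * (x - y) ^ (-μ)
  have hg_succ (m : ℕ) : ∫ y in Ioc 0 x, g (m + 1) y = Gamma (1 - μ) * fracMonomial μ m x :=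
    integral_fracMonomialDeriv_succ_mul_sub_rpow hμ0 hμ1 hx m
  have hg_integrable (r : ℕ) : IntegrableOn (g r) (Ioc 0 x) := by
    rcases r with _ | m
    · simp [g, fracMonomialDeriv_zero]
    · refine Integrable.of_integral_ne_zero ?_
      rw [hg_succ, fracMonomial]
      have := Gamma_pos_of_pos (by linarith : 0 < 1 - μ)
      have := Gamma_pos_of_pos (by positivity : 0 < μ * (m : ℝ) + 1)
      positivity
  have hg_nonneg (r : ℕ) (y : ℝ) (hy : y ∈ Ioc 0 x) : 0 ≤ g r y := by
    obtain ⟨hy0, hyx⟩ := hy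
    have := Gamma_pos_of_pos (by positivity : 0 < μ * r + 1)
    have : 0 ≤ x - y := by linarith
    simp only [g, fracMonomialDeriv]
    positivity
  have hnorm (r : ℕ) : ∫ y in Ioc 0 x, ‖b r * g r y‖ = |b r| * ∫ y in Ioc 0 x, g r y := by
    rw [← integral_const_mul]
    refine setIntegral_congr_fun measurableSet_Ioc fun y hy => ?_
    rw [norm_mul, Real.norm_eq_abs, Real.norm_of_nonneg (hg_nonneg r y hy)]
  have hnorm_summable : Summable fun r => ∫ y in Ioc 0 x, ‖b r * g r y‖ := by
    simp_rw [hnorm]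
    refine (summable_nat_add_iff 1).1 ?_
    simp_rw [hg_succ, mul_left_comm _ (Gamma (1 - μ))]
    refine (summable_mul_fracMonomial hμ0 hμ1 (C := |C * q|) (q := |q|)
      (b := fun m => |b (m + 1)|) (fun m => ?_) hx.le).mul_left _
    rw [abs_abs, ← abs_pow, ← abs_mul, mul_assoc, ← pow_succ']
    exact (hb _).trans (le_abs_self _)
  have hsum := hasSum_integral_of_summable_integral_norm
    (fun r => (hg_integrable r).const_mul (b r)) hnorm_summable
  rw [← hasSum_nat_add_iff' 1] at hsum
  simpa [g, fracMonomialDeriv_zero, integral_const_mul, hg_succ] using hsum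

theorem caputo_tsum_mul_fracMonomial (hμ0 : 0 < μ) (hμ1 : μ < 1) (hb : ∀ r, |b r| ≤ C * q ^ r)
    {f : ℝ → ℝ} (hf : ∀ y, 0 < y → f y = ∑' r, b r * fracMonomial μ r y) {x : ℝ} (hx : 0 < x) :
    caputo μ f x = ∑' m : ℕ, b (m + 1) * fracMonomial μ m x := by
  have hderiv : EqOn (fun y => deriv f y * (x - y) ^ (-μ))
      (fun y => ∑' r, b r * (fracMonomialDeriv μ r y * (x - y) ^ (-μ))) (Ioc 0 x) := by
    intro y ⟨hy, _⟩
    have hfy : f =ᶠ[nhds y] fun z => ∑' r, b r * fracMonomial μ r z :=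
      eventually_of_mem (Ioi_mem_nhds hy) hf
    simp only [← mul_assoc, tsum_mul_right,
      ((hasDerivAt_tsum_mul_fracMonomial hμ0 hμ1 hb hy).congr_of_eventuallyEq hfy).deriv]
  have hΓ := Gamma_pos_of_pos (by linarith : 0 < 1 - μ)
  rw [caputo, intervalIntegral.integral_of_le hx.le, setIntegral_congr_fun measurableSet_Ioc hderiv,
    ← (hasSum_integral_mul_fracMonomialDeriv_mul_sub_rpow hμ0 hμ1 hb hx).tsum_eq]
  simp_rw [mul_left_comm (b _), tsum_mul_left]
  field_simp

end FracPowerSeries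

theorem hasSum_pow_mul_fracMonomial {μ : ℝ} (hμ0 : 0 < μ) (hμ1 : μ < 1) (k : ℝ) {y : ℝ}
    (hy : 0 ≤ y) :
    HasSum (fun r : ℕ => k ^ r * fracMonomial μ r y) (mittagLeffler μ 1 (k * y ^ μ)) := by
  simp_rw [fracMonomial_eq_pow hy, ← mul_div_assoc, ← mul_pow]
  exact (summable_pow_div_Gamma hμ0 hμ1 _).hasSum

theorem abs_ite_le_mul_pow {K : ℝ} (hK : 1 ≤ K) (r r₀ : ℕ) (a : ℝ) :
    |if r = r₀ then a else 0| ≤ |a| * K ^ r := by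
  have hKr : 1 ≤ K ^ r := one_le_pow₀ hK
  split_ifs
  · exact le_mul_of_one_le_right (abs_nonneg a) hKr
  · simpa using mul_nonneg (abs_nonneg a) (zero_le_one.trans hKr)

theorem abs_sum_mul_pow_le {ι : Type*} (S : Finset ι) (c k : ι → ℝ) (r : ℕ) :
    |∑ s ∈ S, c s * k s ^ r| ≤ (∑ s ∈ S, |c s|) * (1 + ∑ s ∈ S, |k s|) ^ r := by
  refine (Finset.abs_sum_le_sum_abs _ _).trans ?_
  rw [Finset.sum_mul]
  refine Finset.sum_le_sum fun s hs => ?_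
  rw [abs_mul, abs_pow]
  gcongr
  linarith [Finset.single_le_sum (fun s _ => abs_nonneg (k s)) hs]

theorem caputo_const_add_rpow_add_sum_mittagLeffler {ι : Type*} (S : Finset ι) {μ : ℝ}
    (hμ0 : 0 < μ) (hμ1 : μ < 1) (A B : ℝ) (c k : ι → ℝ) {f : ℝ → ℝ}
    (hf : ∀ y, 0 < y → f y = A + B * y ^ μ + ∑ s ∈ S, c s * mittagLeffler μ 1 (k s * y ^ μ))
    {x : ℝ} (hx : 0 < x) :
    caputo μ f x = B * Gamma (μ + 1) + ∑ s ∈ S, c s * k s * mittagLeffler μ 1 (k s * x ^ μ) := by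
  have hΓ := (Gamma_pos_of_pos (by linarith : 0 < μ + 1)).ne'
  set b : ℕ → ℝ := fun r =>
    (if r = 0 then A else 0) + (if r = 1 then B * Gamma (μ + 1) else 0) + ∑ s ∈ S, c s * k s ^ r
  have hseries (y : ℝ) (hy : 0 ≤ y) : HasSum (fun r => b r * fracMonomial μ r y)
      (A + B * y ^ μ + ∑ s ∈ S, c s * mittagLeffler μ 1 (k s * y ^ μ)) := by
    convert ((hasSum_ite_eq 0 A).add (hasSum_ite_eq 1 (B * y ^ μ))).add
      (hasSum_sum fun s _ => (hasSum_pow_mul_fracMonomial hμ0 hμ1 (k s) hy).mul_left (c s)) using 1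
    ext r
    rcases r with _ | _ | r
    · simp [b, fracMonomial_zero]
    · simp [b, add_mul, Finset.sum_mul, mul_assoc, fracMonomial_one, mul_div_cancel₀ _ hΓ]
    · simp [b, Finset.sum_mul, mul_assoc]
  have hshift : HasSum (fun m => b (m + 1) * fracMonomial μ m x)
      (B * Gamma (μ + 1) + ∑ s ∈ S, c s * k s * mittagLeffler μ 1 (k s * x ^ μ)) := by
    convert (hasSum_ite_eq 0 (B * Gamma (μ + 1))).add (hasSum_sum fun s _ =>
      (hasSum_pow_mul_fracMonomial hμ0 hμ1 (k s) hx.le).mul_left (c s * k s)) using 1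
    ext m
    rcases m with _ | m <;>
      simp [b, Finset.sum_mul, mul_assoc, pow_succ', fracMonomial_zero]
  have hK : 1 ≤ 1 + ∑ s ∈ S, |k s| := le_add_of_nonneg_right (by positivity)
  have hb (r : ℕ) :
      |b r| ≤ (|A| + |B * Gamma (μ + 1)| + ∑ s ∈ S, |c s|) * (1 + ∑ s ∈ S, |k s|) ^ r :=
    calc |b r| ≤ |if r = 0 then A else 0| + |if r = 1 then B * Gamma (μ + 1) else 0|
          + |∑ s ∈ S, c s * k s ^ r| := (abs_add_le _ _).trans (by gcongr; exact abs_add_le _ _)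
      _ ≤ _ := by
        rw [add_mul, add_mul]
        gcongr
        · exact abs_ite_le_mul_pow hK r 0 A
        · exact abs_ite_le_mul_pow hK r 1 _
        · exact abs_sum_mul_pow_le S c k r
  rw [caputo_tsum_mul_fracMonomial hμ0 hμ1 hb
    (fun y hy => (hf y hy).trans (hseries y hy.le).tsum_eq.symm) hx, hshift.tsum_eq]

theorem linear_fractional_diffusion_convection_exact_general (α β : ℝ)
    (hα : α ∈ Set.Ioo (0 : ℝ) 1) (hβ : β ∈ Set.Ioo (0 : ℝ) 1)
    (n : ℕ) (c₁ c₂ a₀ b₁ : ℝ) (r kc : Fin n → ℝ) :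
    ∀ x : ℝ, 0 < x → ∀ t : ℝ, 0 < t →
      caputoT α (uSol α β n c₁ c₂ a₀ b₁ r kc) x t =
        a₀ * caputoX β (caputoX β (uSol α β n c₁ c₂ a₀ b₁ r kc)) x t
          - b₁ * caputoX β (uSol α β n c₁ c₂ a₀ b₁ r kc) x t := by
  intro x hx t ht
  set u := uSol α β n c₁ c₂ a₀ b₁ r kc
  set ω : Fin n → ℝ := fun s => (a₀ * kc s - b₁) * kc s
  have hT : caputoT α u x t = -(c₂ * b₁ * Gamma (β + 1))
      + ∑ s, r s * mittagLeffler β 1 (kc s * x ^ β) * ω s * mittagLeffler α 1 (ω s * t ^ α) := by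
    rw [caputoT_eq_caputo, caputo_const_add_rpow_add_sum_mittagLeffler Finset.univ hα.1 hα.2
      (c₁ + c₂ * x ^ β) (-(c₂ * b₁ * (Gamma (β + 1) / Gamma (α + 1))))
      (fun s => r s * mittagLeffler β 1 (kc s * x ^ β)) ω _ ht]
    · have := (Gamma_pos_of_pos (by linarith [hα.1] : 0 < α + 1)).ne'
      congr 1
      field_simp
    · intro y _
      simp only [u, uSol, ω, mul_right_comm (r _) (mittagLeffler α 1 _)]
      ring
  have hX (z : ℝ) (hz : 0 < z) : caputoX β u z t = c₂ * Gamma (β + 1)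
      + ∑ s, r s * mittagLeffler α 1 (ω s * t ^ α) * kc s * mittagLeffler β 1 (kc s * z ^ β) :=
    (caputoX_eq_caputo β u z t).trans <|
      caputo_const_add_rpow_add_sum_mittagLeffler _ hβ.1 hβ.2 _ c₂ _ kc (fun y _ => rfl) hz
  rw [hT, caputoX_eq_caputo β (caputoX β u), caputo_const_add_rpow_add_sum_mittagLeffler _ hβ.1 hβ.2
    _ 0 _ kc (fun y hy => by rw [hX y hy, zero_mul, add_zero]) hx, hX x hx, zero_mul, zero_add,
    mul_add, Finset.mul_sum, Finset.mul_sum, sub_add_eq_sub_sub_swap, ← Finset.sum_sub_distrib,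
    sub_eq_neg_add]
  congr 1
  · ring
  · exact Finset.sum_congr rfl fun s _ => by ring

/-- **Exact solution of the linear time-space fractional diffusion–convection equation**
`C_t^α u = a₀ C_x^β(C_x^β u) - b₁ C_x^β u` for all `x > 0`, `t > 0`. -/
theorem linear_fractional_diffusion_convection_exact (α β : ℝ)
    (hα : α ∈ Set.Ioo (0 : ℝ) 1) (hβ : β ∈ Set.Ioo (0 : ℝ) 1)
    (n : ℕ) (hn : 1 ≤ n) (c₁ c₂ a₀ b₁ : ℝ) (r kc : Fin n → ℝ) :
    ∀ x : ℝ, 0 < x → ∀ t : ℝ, 0 < t →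
      caputoT α (uSol α β n c₁ c₂ a₀ b₁ r kc) x t =
        a₀ * caputoX β (caputoX β (uSol α β n c₁ c₂ a₀ b₁ r kc)) x t
          - b₁ * caputoX β (uSol α β n c₁ c₂ a₀ b₁ r kc) x t :=
  linear_fractional_diffusion_convection_exact_general α β hα hβ n c₁ c₂ a₀ b₁ r kc
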